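/- Suppose 𝒮 is a weakly compatible split system on a finite set X whose incompatibility graph ℐ(𝒮) is connected, and 𝒮' ⊆ 𝒮 is an octahedral split subsystem. Then 𝒮 = 𝒮'. -/

import Mathlib

variable {X : Type*}
variable {X : Type*}

/-- `S` is a split of `X`: an unordered pair `{A, Aᶜ}` of nonempty complementary parts. -/
def IsSplit (S : Set (Set X)) : Prop :=
  ∃ A : Set X, A.Nonempty ∧ Aᶜ.Nonempty ∧ S = {A, Aᶜ}

/-- Two splits are compatible if some part of one and some part of the other cover `X`. -/
def Compatible (S T : Set (Set X)) : Prop :=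
  ∃ A ∈ S, ∃ B ∈ T, A ∪ B = Set.univ

/-- `x` and `y` lie in the same part of the split `S`, i.e. `S(x) = S(y)`. -/
def SameSide (S : Set (Set X)) (x y : X) : Prop :=
  ∀ A ∈ S, (x ∈ A ↔ y ∈ A)

/-- A split system is weakly compatible if there are no three splits `S₁, S₂, S₃` and
four elements `x₀, x₁, x₂, x₃` with `S_j(x_i) = S_j(x₀)` iff `i = j`. -/
def WeaklyCompatible (𝒮 : Set (Set (Set X))) : Prop :=
  ¬ ∃ (S : Fin 3 → Set (Set X)) (x : Fin 4 → X),
      (∀ j, S j ∈ 𝒮) ∧ ∀ i j : Fin 3, (SameSide (S j) (x i.succ) (x 0) ↔ i = j)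

/-- A split system is octahedral if it arises from a partition `X = X₁ ∪̇ ... ∪̇ X₆`
as `S_i = X_i ∪ X_{i+1} ∪ X_{i+2} | X_{i+3} ∪ X_{i+4} ∪ X_{i+5}` (`i = 1, 2, 3`,
indices mod 6) together with `S₄ = X₁ ∪ X₃ ∪ X₅ | X₂ ∪ X₄ ∪ X₆`. -/
def IsOctahedral (𝒮 : Set (Set (Set X))) : Prop :=
  ∃ Y : ℕ → Set X,
    (∀ i < 6, (Y i).Nonempty) ∧
    (∀ i < 6, ∀ j < 6, i ≠ j → Y i ∩ Y j = ∅) ∧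
    (⋃ i ∈ Finset.range 6, Y i) = Set.univ ∧
    𝒮 = {T | (∃ i < 3, T = {Y i ∪ Y (i+1) ∪ Y (i+2),
                            Y ((i+3) % 6) ∪ Y ((i+4) % 6) ∪ Y ((i+5) % 6)}) ∨
             T = {Y 0 ∪ Y 2 ∪ Y 4, Y 1 ∪ Y 3 ∪ Y 5}}

/-- The incompatibility graph of a split system: vertices are the splits of `𝒮`,
with an edge between each pair of distinct incompatible splits. -/
def IncompGraph (𝒮 : Set (Set (Set X))) : SimpleGraph ↥𝒮 where
  Adj S T := S ≠ T ∧ ¬ Compatible (S : Set (Set X)) T ∧ ¬ Compatible (T : Set (Set X)) S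
  symm := by
    refine ⟨fun S T h => ?_⟩
    exact ⟨h.1.symm, h.2.2, h.2.1⟩
  loopless := by
    refine ⟨fun S h => ?_⟩
    exact h.1 rfl

/-!
Cut `X` into the six blocks of the octahedral subsystem and record, for a split `B`, its trace
on the blocks: for each block, the side of `B` containing it, or the fact that `B` cuts it.
Incompatibility with an octahedral split and weak compatibility with every pair of them are
conditions on the trace alone, and a check of all `3⁶` traces shows that they force `B` to be
one of the four octahedral splits. A split of `𝒮` outside the subsystem would, by connectedness
of the incompatibility graph, lead along a path to such a `B` adjacent to the subsystem yet
outside it.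
-/

def splitOf (f : X → Bool) : Set (Set X) := {{x | f x = true}, {x | f x = true}ᶜ}

theorem mem_splitOf (f : X → Bool) (p : Bool) : {x | f x = p} ∈ splitOf f := by
  cases p
  · refine Or.inr (Set.ext fun x => ?_)
    simp
  · exact Or.inl rfl

theorem splitOf_eq_pair {f : X → Bool} {U V : Set X} (hU : ∀ x, x ∈ U ↔ f x = true)
    (hV : ∀ x, x ∈ V ↔ f x = false) : splitOf f = {U, V} := by
  have hU' : U = {x | f x = true} := Set.ext hU
  have hV' : V = {x | f x = true}ᶜ := Set.ext fun x => by simp [hV]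
  rw [hU', hV', splitOf]

theorem splitOf_xor (e : Bool) (f : X → Bool) : splitOf (fun x => xor e (f x)) = splitOf f := by
  cases e
  · simp
  · rw [splitOf_eq_pair (U := {x | f x = true}ᶜ) (V := {x | f x = true}) (by simp) (by simp),
      Set.pair_comm, splitOf]

theorem sameSide_splitOf {f : X → Bool} {x y : X} : SameSide (splitOf f) x y ↔ f x = f y := by
  simp only [SameSide, splitOf, Set.mem_insert_iff, Set.mem_singleton_iff, forall_eq_or_imp,
    forall_eq, Set.mem_ofPred_eq, Set.mem_compl_iff, not_iff_not, and_self]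
  cases f x <;> cases f y <;> simp

theorem IsSplit.exists_eq_splitOf {S : Set (Set X)} (h : IsSplit S) :
    ∃ f : X → Bool, S = splitOf f := by
  classical
  obtain ⟨A, -, -, rfl⟩ := h
  exact ⟨fun x => decide (x ∈ A), by simp [splitOf]⟩

theorem exists_of_not_compatible_splitOf {f g : X → Bool}
    (h : ¬ Compatible (splitOf f) (splitOf g)) (p q : Bool) : ∃ x, f x = p ∧ g x = q := by
  by_contra! hpq
  refine h ⟨_, mem_splitOf f (!p), _, mem_splitOf g (!q), Set.eq_univ_of_forall fun x => ?_⟩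
  have := hpq x
  revert this
  simp only [Set.mem_union, Set.mem_ofPred_eq]
  cases f x <;> cases g x <;> cases p <;> cases q <;> decide

/-- Three splits are weakly incompatible exactly when one parity class of the cube `Bool³` is
realised; the four points of the class are the `x₀, …, x₃` of the definition. -/
theorem WeaklyCompatible.not_forall_parity_realized {𝒮 : Set (Set (Set X))}
    (hwc : WeaklyCompatible 𝒮) {f g h : X → Bool} (hf : splitOf f ∈ 𝒮) (hg : splitOf g ∈ 𝒮)
    (hh : splitOf h ∈ 𝒮) (c : Bool) :
    ¬ ∀ p q r : Bool, xor p (xor q r) = c → ∃ x, f x = p ∧ g x = q ∧ h x = r := by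
  intro hall
  obtain ⟨x₀, hf₀, hg₀, hh₀⟩ := hall c true true (by cases c <;> rfl)
  obtain ⟨x₁, hf₁, hg₁, hh₁⟩ := hall c false false (by cases c <;> rfl)
  obtain ⟨x₂, hf₂, hg₂, hh₂⟩ := hall (!c) true false (by cases c <;> rfl)
  obtain ⟨x₃, hf₃, hg₃, hh₃⟩ := hall (!c) false true (by cases c <;> rfl)
  refine hwc ⟨![splitOf f, splitOf g, splitOf h], ![x₀, x₁, x₂, x₃], ?_, ?_⟩
  · intro j
    fin_cases j <;> assumption
  · intro i j
    fin_cases i <;> fin_cases j <;> cases c <;> simp_all [sameSide_splitOf]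

/-- Block `j` is the paper's `X_{j+1}`, and `k` numbers the splits `S_{k+1}`. -/
def octSide (k : Fin 4) (j : Fin 6) : Bool :=
  if k.val = 3 then j.val % 2 = 0 else (j.val + 6 - k.val) % 6 < 3

/-- `τ j = some s` when block `j` lies on side `s` of a split, `none` when the split cuts it. -/
theorem octahedral_trace_classification : ∀ τ : Fin 6 → Option Bool,
    (∃ k, ∀ p q, ∃ j, octSide k j = q ∧ τ j ≠ some !p) →
    (∀ a b c, ¬ ∀ p q r, xor p (xor q r) = c →
      ∃ j, octSide a j = q ∧ octSide b j = r ∧ τ j ≠ some !p) →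
    ∃ k e, ∀ j, τ j = some (xor e (octSide k j)) := by
  decide +kernel

section BlockTrace

variable {ι : Type*} (blk : X → ι) (f : X → Bool)

open Classical in
noncomputable def blockTrace (j : ι) : Option Bool :=
  if ∀ x, blk x = j → f x = true then some true
  else if ∀ x, blk x = j → f x = false then some false else none

variable {blk f}

theorem blockTrace_ne_some_not_iff {j : ι} (hj : ∃ x, blk x = j) (p : Bool) :
    blockTrace blk f j ≠ some !p ↔ ∃ x, blk x = j ∧ f x = p := by
  unfold blockTrace
  split_ifs with h₁ h₂
  all_goals cases p <;> aesop

theorem eq_of_blockTrace_eq_some {x : X} {s : Bool} (h : blockTrace blk f (blk x) = some s) :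
    f x = s := by
  have := (blockTrace_ne_some_not_iff (blk := blk) ⟨x, rfl⟩ (f x)).2 ⟨x, rfl, rfl⟩
  cases s <;> cases hfx : f x <;> simp_all

end BlockTrace

def octSplit (blk : X → Fin 6) (k : Fin 4) : Set (Set X) := splitOf fun x => octSide k (blk x)

theorem exists_eq_octSplit_of_not_compatible {𝒮 : Set (Set (Set X))} (hwc : WeaklyCompatible 𝒮)
    {blk : X → Fin 6} (hblk : Function.Surjective blk) (hoct : ∀ k, octSplit blk k ∈ 𝒮)
    {f : X → Bool} (hf : splitOf f ∈ 𝒮) {k : Fin 4}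
    (hk : ¬ Compatible (splitOf f) (octSplit blk k)) :
    ∃ k', splitOf f = octSplit blk k' := by
  have hmeets (j : Fin 6) (p : Bool) := blockTrace_ne_some_not_iff (f := f) (hblk j) p
  have htrace_inc : ∃ k, ∀ p q, ∃ j, octSide k j = q ∧ blockTrace blk f j ≠ some !p := by
    refine ⟨k, fun p q => ?_⟩
    obtain ⟨x, hfx, hx⟩ := exists_of_not_compatible_splitOf hk p q
    exact ⟨blk x, hx, (hmeets _ _).2 ⟨x, rfl, hfx⟩⟩
  have htrace_wc : ∀ a b c, ¬ ∀ p q r, xor p (xor q r) = c →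
      ∃ j, octSide a j = q ∧ octSide b j = r ∧ blockTrace blk f j ≠ some !p := by
    intro a b c hall
    refine hwc.not_forall_parity_realized hf (hoct a) (hoct b) c fun p q r hpqr => ?_
    obtain ⟨j, hq, hr, hj⟩ := hall p q r hpqr
    obtain ⟨x, rfl, hx⟩ := (hmeets j p).1 hj
    exact ⟨x, hx, hq, hr⟩
  obtain ⟨k', e, htrace⟩ := octahedral_trace_classification _ htrace_inc htrace_wc
  have hfx : f = fun x => xor e (octSide k' (blk x)) :=
    funext fun x => eq_of_blockTrace_eq_some (htrace (blk x))
  exact ⟨k', by rw [hfx, splitOf_xor]; rfl⟩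

theorem exists_index_of_partition {n : ℕ} {Y : ℕ → Set X}
    (hdisj : ∀ i < n, ∀ j < n, i ≠ j → Y i ∩ Y j = ∅)
    (hcov : (⋃ i ∈ Finset.range n, Y i) = Set.univ) :
    ∃ blk : X → Fin n, ∀ i < n, ∀ x, x ∈ Y i ↔ (blk x : ℕ) = i := by
  have hex (x : X) : ∃ j : Fin n, x ∈ Y j := by
    have hx : x ∈ ⋃ i ∈ Finset.range n, Y i := hcov ▸ Set.mem_univ x
    simp only [Set.mem_iUnion, Finset.mem_range] at hx
    obtain ⟨i, hi, hxi⟩ := hx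
    exact ⟨⟨i, hi⟩, hxi⟩
  choose blk hblk using hex
  refine ⟨blk, fun i hi x => ⟨fun hx => ?_, fun h => h ▸ hblk x⟩⟩
  by_contra hne
  exact (Set.eq_empty_iff_forall_notMem.1 (hdisj _ (blk x).isLt i hi hne)) x ⟨hblk x, hx⟩

theorem IsOctahedral.exists_eq_range_octSplit {𝒮 : Set (Set (Set X))} (h : IsOctahedral 𝒮) :
    ∃ blk : X → Fin 6, Function.Surjective blk ∧ 𝒮 = Set.range (octSplit blk) := by
  obtain ⟨Y, hne, hdisj, hcov, rfl⟩ := h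
  obtain ⟨blk, hY⟩ := exists_index_of_partition hdisj hcov
  refine ⟨blk, fun j => ?_, ?_⟩
  · obtain ⟨x, hx⟩ := hne j j.isLt
    exact ⟨x, Fin.ext ((hY j j.isLt x).1 hx)⟩
  have h₀₁₂₃ : octSplit blk 0 = {Y 0 ∪ Y 1 ∪ Y 2, Y 3 ∪ Y 4 ∪ Y 5} ∧
      octSplit blk 1 = {Y 1 ∪ Y 2 ∪ Y 3, Y 4 ∪ Y 5 ∪ Y 0} ∧
      octSplit blk 2 = {Y 2 ∪ Y 3 ∪ Y 4, Y 5 ∪ Y 0 ∪ Y 1} ∧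
      octSplit blk 3 = {Y 0 ∪ Y 2 ∪ Y 4, Y 1 ∪ Y 3 ∪ Y 5} := by
    refine ⟨splitOf_eq_pair ?_ ?_, splitOf_eq_pair ?_ ?_, splitOf_eq_pair ?_ ?_,
      splitOf_eq_pair ?_ ?_⟩ <;>
    · intro x
      simp (disch := omega) only [Set.mem_union, hY]
      generalize blk x = j
      revert j
      decide
  obtain ⟨h₀, h₁, h₂, h₃⟩ := h₀₁₂₃
  ext T
  simp only [Set.mem_ofPred_eq, Set.mem_range]
  constructor
  · rintro (⟨i, hi, rfl⟩ | rfl)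
    · interval_cases i
      exacts [⟨0, h₀⟩, ⟨1, h₁⟩, ⟨2, h₂⟩]
    · exact ⟨3, h₃⟩
  · rintro ⟨k, rfl⟩
    fin_cases k
    exacts [Or.inl ⟨0, by norm_num, h₀⟩, Or.inl ⟨1, by norm_num, h₁⟩,
      Or.inl ⟨2, by norm_num, h₂⟩, Or.inr h₃]

theorem stmt4_general (𝒮 𝒮' : Set (Set (Set X)))
    (hsplits : ∀ S ∈ 𝒮, IsSplit S)
    (hwc : WeaklyCompatible 𝒮)
    (hconn : (IncompGraph 𝒮).Connected)
    (hsub : 𝒮' ⊆ 𝒮) (hoct : IsOctahedral 𝒮') :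
    𝒮 = 𝒮' := by
  obtain ⟨blk, hblk, rfl⟩ := hoct.exists_eq_range_octSplit
  have hmem (k : Fin 4) : octSplit blk k ∈ 𝒮 := hsub ⟨k, rfl⟩
  refine Set.Subset.antisymm (fun T hT => ?_) hsub
  by_contra hT'
  obtain ⟨w⟩ := hconn.preconnected ⟨T, hT⟩ ⟨_, hmem 0⟩
  obtain ⟨d, -, hout, hin⟩ :=
    w.exists_boundary_dart {S | S.1 ∉ Set.range (octSplit blk)} hT' (by simp)
  obtain ⟨k, hk⟩ : d.snd.1 ∈ Set.range (octSplit blk) := not_not.1 hin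
  obtain ⟨f, hf⟩ := (hsplits _ d.fst.2).exists_eq_splitOf
  have hinc : ¬ Compatible (splitOf f) (octSplit blk k) := hf ▸ hk ▸ d.adj.2.1
  obtain ⟨k', hk'⟩ := exists_eq_octSplit_of_not_compatible hwc hblk hmem (hf ▸ d.fst.2) hinc
  exact hout ⟨k', by rw [hf, hk']⟩

/-- a weakly compatible split system with connected incompatibility graph
that contains an octahedral subsystem is equal to that subsystem. -/
theorem stmt4 [Fintype X] (𝒮 𝒮' : Set (Set (Set X)))
    (hsplits : ∀ S ∈ 𝒮, IsSplit S)
    (hwc : WeaklyCompatible 𝒮)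
    (hconn : (IncompGraph 𝒮).Connected)
    (hsub : 𝒮' ⊆ 𝒮) (hoct : IsOctahedral 𝒮') :
    𝒮 = 𝒮' :=
  stmt4_general 𝒮 𝒮' hsplits hwc hconn hsub hoct
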